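/- (Mutualism theorem.) In the AI regulation game with quadratic costs, suppose both players' cost matrices satisfy the two-sided investment condition |c_pab| < min(√(c_paa·c_pbb), c_paa·rβ/rα, c_pbb·rα/rβ) for p ∈ {0,1}. Let γ0^A := (δ/2)·C0⁻¹·r and γ1^A := γ0^A + ((1−δ)/2)·C1⁻¹·r with β-coordinates β0^A and β1^A. Then there exists ε > 0 such that the regulatory regime θG = β0^A + ε, θD = β1^A + 2ε mutually improves both players' utilities: every subgame perfect equilibrium (b, γ0*) under regulation (β0^A + ε, β1^A + 2ε) satisfies U_G(γ0*, b(γ0*)) > U_G(γ0^A, γ1^A) and U_D(γ0*, b(γ0*)) > U_D(γ0^A, γ1^A). -/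

import Mathlib

open Matrix

/-- The domain specialist's utility
`U_D(γ0, γ1) = (1−δ)·(rα·α1 + rβ·β1) − (γ1−γ0)ᵀ C1 (γ1−γ0)`. -/
noncomputable def UD (c1aa c1ab c1bb rα rβ δ : ℝ) (γ0 γ1 : Fin 2 → ℝ) : ℝ :=
  (1 - δ) * (rα * γ1 0 + rβ * γ1 1)
    - (γ1 - γ0) ⬝ᵥ ((!![c1aa, c1ab; c1ab, c1bb] : Matrix (Fin 2) (Fin 2) ℝ) *ᵥ (γ1 - γ0))

/-- The generalist's utility `U_G(γ0, γ1) = δ·(rα·α1 + rβ·β1) − γ0ᵀ C0 γ0`. -/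
noncomputable def UG (c0aa c0ab c0bb rα rβ δ : ℝ) (γ0 γ1 : Fin 2 → ℝ) : ℝ :=
  δ * (rα * γ1 0 + rβ * γ1 1)
    - γ0 ⬝ᵥ ((!![c0aa, c0ab; c0ab, c0bb] : Matrix (Fin 2) (Fin 2) ℝ) *ᵥ γ0)

/-- Subgame perfect equilibrium under regulation `(θG, θD)`: `b` maps each generalist
strategy to a specialist best response over the regulated feasible set
`F(γ0, θD) = {(α, β) : α ≥ α0, β ≥ max(β0, θD)}`, and `γ0s` maximizes the generalist's
utility over her regulated strategies `{(α, β) : α ≥ 0, β ≥ θG}`. -/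
def IsSPE (c0aa c0ab c0bb c1aa c1ab c1bb rα rβ δ θG θD : ℝ)
    (b : (Fin 2 → ℝ) → (Fin 2 → ℝ)) (γ0s : Fin 2 → ℝ) : Prop :=
  (∀ γ0 : Fin 2 → ℝ,
      (γ0 0 ≤ (b γ0) 0 ∧ max (γ0 1) θD ≤ (b γ0) 1) ∧
      ∀ γ : Fin 2 → ℝ, γ0 0 ≤ γ 0 → max (γ0 1) θD ≤ γ 1 →
        UD c1aa c1ab c1bb rα rβ δ γ0 γ ≤ UD c1aa c1ab c1bb rα rβ δ γ0 (b γ0)) ∧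
  0 ≤ γ0s 0 ∧ θG ≤ γ0s 1 ∧
  ∀ γ0 : Fin 2 → ℝ, 0 ≤ γ0 0 → θG ≤ γ0 1 →
    UG c0aa c0ab c0bb rα rβ δ γ0 (b γ0) ≤ UG c0aa c0ab c0bb rα rβ δ γ0s (b γ0s)

/-- The no-regulation equilibrium strategy of the generalist: `γ0^A = (δ/2)·C0⁻¹·r`. -/
noncomputable def gamma0A (c0aa c0ab c0bb rα rβ δ : ℝ) : Fin 2 → ℝ :=
  (δ / 2) • ((!![c0aa, c0ab; c0ab, c0bb] : Matrix (Fin 2) (Fin 2) ℝ)⁻¹ *ᵥ ![rα, rβ])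

/-- The no-regulation equilibrium outcome: `γ1^A = γ0^A + ((1−δ)/2)·C1⁻¹·r`. -/
noncomputable def gamma1A (c0aa c0ab c0bb c1aa c1ab c1bb rα rβ δ : ℝ) : Fin 2 → ℝ :=
  gamma0A c0aa c0ab c0bb rα rβ δ +
    ((1 - δ) / 2) • ((!![c1aa, c1ab; c1ab, c1bb] : Matrix (Fin 2) (Fin 2) ℝ)⁻¹ *ᵥ ![rα, rβ])

/-- The paper's (one-sided) investment condition on a cost matrix
`!![caa, cab; cab, cbb]`. -/
def InvCond (caa cab cbb rα rβ : ℝ) : Prop :=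
  cab < min (Real.sqrt (caa * cbb)) (min (caa * rβ / rα) (cbb * rα / rβ))

/-- The paper's two-sided investment condition on a cost matrix
`!![caa, cab; cab, cbb]`. -/
def InvCond2 (caa cab cbb rα rβ : ℝ) : Prop :=
  |cab| < min (Real.sqrt (caa * cbb)) (min (caa * rβ / rα) (cbb * rα / rβ))


/-!
Without regulation the specialist adds `D = ((1−δ)/2)·C1⁻¹r` to whatever the generalist
chooses. A floor `θD` that binds by `s` forces the specialist to `β = β0 + D_β + s` and,
through its first-order condition in `α`, to `α = α0 + D_α − (c1ab/c1aa)·s`; this costs the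
specialist only `det C1 / c1aa · s²`. Under the regime `θG = β0^A + ε, θD = β1^A + 2ε` the
generalist can play `(α0^A, β0^A + ε)`, which gains her `ε·δ·(rβ − (c1ab/c1aa)·rα) − c0bb·ε²`,
so her equilibrium payoff beats the unregulated one. In any equilibrium she invests at least
`ε` more in `β` and, by her first-order condition in `α`, no less in the direction
`c0aa·Δα + c0ab·Δβ`; the specialist's revenue therefore grows linearly in `ε` while its loss
from the floor, with `s ≤ ε`, is only quadratic.
-/

open Filter Topology

lemma UD_eq (c1aa c1ab c1bb rα rβ δ : ℝ) (γ0 γ1 : Fin 2 → ℝ) :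
    UD c1aa c1ab c1bb rα rβ δ γ0 γ1 =
      (1 - δ) * (rα * γ1 0 + rβ * γ1 1)
        - (c1aa * (γ1 0 - γ0 0) ^ 2 + 2 * c1ab * (γ1 0 - γ0 0) * (γ1 1 - γ0 1)
            + c1bb * (γ1 1 - γ0 1) ^ 2) := by
  simp only [UD, mulVec, dotProduct, Fin.sum_univ_two, of_apply, cons_val', cons_val_zero,
    cons_val_one, empty_val', cons_val_fin_one, Pi.sub_apply]
  ring

lemma UG_eq (c0aa c0ab c0bb rα rβ δ : ℝ) (γ0 γ1 : Fin 2 → ℝ) :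
    UG c0aa c0ab c0bb rα rβ δ γ0 γ1 =
      δ * (rα * γ1 0 + rβ * γ1 1)
        - (c0aa * γ0 0 ^ 2 + 2 * c0ab * γ0 0 * γ0 1 + c0bb * γ0 1 ^ 2) := by
  simp only [UG, mulVec, dotProduct, Fin.sum_univ_two, of_apply, cons_val', cons_val_zero,
    cons_val_one, empty_val', cons_val_fin_one]
  ring

namespace InvCond2

variable {caa cab cbb rα rβ : ℝ}

lemma det_pos (h : InvCond2 caa cab cbb rα rβ) : 0 < caa * cbb - cab ^ 2 := by
  have hsq := (Real.lt_sqrt (abs_nonneg cab)).mp (h.trans_le (min_le_left _ _))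
  rw [sq_abs] at hsq
  linarith

lemma mul_lt_left (h : InvCond2 caa cab cbb rα rβ) (hrα : 0 < rα) : cab * rα < caa * rβ :=
  (lt_div_iff₀ hrα).mp <| (le_abs_self cab).trans_lt <|
    h.trans_le <| (min_le_right _ _).trans (min_le_left _ _)

lemma mul_lt_right (h : InvCond2 caa cab cbb rα rβ) (hrβ : 0 < rβ) : cab * rβ < cbb * rα :=
  (lt_div_iff₀ hrβ).mp <| (le_abs_self cab).trans_lt <|
    h.trans_le <| (min_le_right _ _).trans (min_le_right _ _)

end InvCond2

lemma exists_smul_inv_mulVec_fin_two_pos {a b c : ℝ} (k p q : ℝ) (hdet : 0 < a * c - b ^ 2)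
    (hk : 0 < k) (hp : b * q < c * p) (hq : b * p < a * q) :
    ∃ w0 w1, k • (!![a, b; b, c]⁻¹ *ᵥ ![p, q]) = ![w0, w1] ∧
      a * w0 + b * w1 = k * p ∧ b * w0 + c * w1 = k * q ∧ 0 < w0 ∧ 0 < w1 := by
  have hdet' := hdet.ne'
  set w0 := k * (c * p - b * q) / (a * c - b ^ 2)
  set w1 := k * (a * q - b * p) / (a * c - b ^ 2)
  have h0 : a * w0 + b * w1 = k * p := by
    simp only [w0, w1]; rw [mul_div_assoc', mul_div_assoc', ← add_div, div_eq_iff hdet']; ring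
  have h1 : b * w0 + c * w1 = k * q := by
    simp only [w0, w1]; rw [mul_div_assoc', mul_div_assoc', ← add_div, div_eq_iff hdet']; ring
  have hunit : IsUnit (!![a, b; b, c]).det := by
    rw [det_fin_two_of]; exact (ne_of_gt (by nlinarith)).isUnit
  refine ⟨w0, w1, ?_, h0, h1, by apply div_pos <;> nlinarith, by apply div_pos <;> nlinarith⟩
  calc k • (!![a, b; b, c]⁻¹ *ᵥ ![p, q]) = !![a, b; b, c]⁻¹ *ᵥ ![k * p, k * q] := by
        rw [← mulVec_smul, smul_cons, smul_cons, smul_empty, smul_eq_mul, smul_eq_mul]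
    _ = !![a, b; b, c]⁻¹ *ᵥ (!![a, b; b, c] *ᵥ ![w0, w1]) := by
        congr 1; ext i; fin_cases i <;> simp [mulVec, dotProduct, h0, h1]
    _ = ![w0, w1] := by rw [mulVec_mulVec, nonsing_inv_mul _ hunit, one_mulVec]

lemma eq_zero_of_quadratic_nonpos {a b c u v : ℝ} (ha : 0 < a) (hdet : 0 < a * c - b ^ 2)
    (h : a * u ^ 2 + 2 * b * u * v + c * v ^ 2 ≤ 0) : u = 0 ∧ v = 0 := by
  have hsq : a * (a * u ^ 2 + 2 * b * u * v + c * v ^ 2)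
      = (a * u + b * v) ^ 2 + (a * c - b ^ 2) * v ^ 2 := by ring
  have hv : v = 0 := by
    refine (sq_nonpos_iff v).mp (nonpos_of_mul_nonpos_right ?_ hdet)
    nlinarith [sq_nonneg (a * u + b * v), mul_nonpos_of_nonneg_of_nonpos ha.le h]
  subst hv
  refine ⟨(sq_nonpos_iff u).mp (nonpos_of_mul_nonpos_right ?_ ha), rfl⟩
  linarith

lemma le_two_mul_of_forall_le {p c α : ℝ} (hc : 0 < c)
    (h : ∀ t, α ≤ t → p * t - c * t ^ 2 ≤ p * α - c * α ^ 2) : p ≤ 2 * c * α := by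
  by_contra! hlt
  obtain ⟨t, ht⟩ : ∃ t, 2 * c * t = p := ⟨p / (2 * c), by field_simp⟩
  have hαt : α < t := by nlinarith
  nlinarith [h t hαt.le, mul_pos hc (pow_pos (sub_pos.mpr hαt) 2)]

lemma eventually_mul_lt (k : ℝ) {m : ℝ} (hm : 0 < m) : ∀ᶠ ε in 𝓝[>] (0 : ℝ), k * ε < m := by
  refine nhdsWithin_le_nhds ((tendsto_id.const_mul k).eventually_lt_const ?_)
  simpa using hm

def IsBestResponse (c1aa c1ab c1bb rα rβ δ θD : ℝ) (γ0 γ1 : Fin 2 → ℝ) : Prop :=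
  (γ0 0 ≤ γ1 0 ∧ max (γ0 1) θD ≤ γ1 1) ∧
    ∀ γ : Fin 2 → ℝ, γ0 0 ≤ γ 0 → max (γ0 1) θD ≤ γ 1 →
      UD c1aa c1ab c1bb rα rβ δ γ0 γ ≤ UD c1aa c1ab c1bb rα rβ δ γ0 γ1

/-- The specialist's response when the floor binds by `s` beyond the unregulated increment
`(D0, D1)`: the `α`-shift `-(c1ab / c1aa) * s` keeps its first-order condition in `α` exact. -/
noncomputable def floorResponse (c1aa c1ab D0 D1 s : ℝ) (γ0 : Fin 2 → ℝ) : Fin 2 → ℝ :=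
  ![γ0 0 + (D0 - c1ab / c1aa * s), γ0 1 + (D1 + s)]

section Regulation

variable {c0aa c0ab c0bb c1aa c1ab c1bb rα rβ δ D0 D1 : ℝ}

theorem IsBestResponse.eq_floorResponse {θD s : ℝ} {γ0 γ1 : Fin 2 → ℝ}
    (h : IsBestResponse c1aa c1ab c1bb rα rβ δ θD γ0 γ1) (hc1aa : 0 < c1aa)
    (hdet : 0 < c1aa * c1bb - c1ab ^ 2)
    (hD0 : c1aa * D0 + c1ab * D1 = (1 - δ) / 2 * rα)
    (hD1 : c1ab * D0 + c1bb * D1 = (1 - δ) / 2 * rβ) (hD1pos : 0 ≤ D1)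
    (hs : max 0 (θD - (γ0 1 + D1)) = s) (hsD0 : c1ab * s ≤ c1aa * D0) :
    γ1 = floorResponse c1aa c1ab D0 D1 s γ0 := by
  set y := floorResponse c1aa c1ab D0 D1 s γ0
  set x := D0 - c1ab / c1aa * s with hx_def
  have hx : c1aa * x = c1aa * D0 - c1ab * s := by rw [hx_def]; field_simp
  have hs0 : 0 ≤ s := hs ▸ le_max_left _ _
  have hy0 : γ0 0 ≤ y 0 := by
    simp only [y, floorResponse, cons_val_zero, le_add_iff_nonneg_right]
    nlinarith
  have hy1 : max (γ0 1) θD ≤ y 1 := by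
    simp only [y, floorResponse, cons_val_one, cons_val_zero]
    exact max_le (by linarith) (by linarith [hs ▸ le_max_right 0 (θD - (γ0 1 + D1))])
  set u := γ1 0 - y 0
  set v := γ1 1 - y 1
  have hsv : 0 ≤ s * v := by
    rcases max_choice 0 (θD - (γ0 1 + D1)) with h' | h' <;> rw [h'] at hs
    · simp [← hs]
    · have hy : y 1 = θD := by
        simp only [y, floorResponse, cons_val_one, cons_val_zero]; linarith
      exact mul_nonneg hs0 (sub_nonneg.mpr (hy ▸ le_of_max_le_right h.1.2))
  -- the gradient of `UD γ0` at `y` is `(0, -2 s det C1 / c1aa)`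
  have key : c1aa * (UD c1aa c1ab c1bb rα rβ δ γ0 y - UD c1aa c1ab c1bb rα rβ δ γ0 γ1)
      = c1aa * (c1aa * u ^ 2 + 2 * c1ab * u * v + c1bb * v ^ 2)
        + 2 * (c1aa * c1bb - c1ab ^ 2) * s * v := by
    rw [UD_eq, UD_eq]
    simp only [y, u, v, floorResponse, cons_val_zero, cons_val_one, ← hx_def]
    linear_combination (2 * c1aa * (γ1 0 - γ0 0 - x)) * hD0
      + (2 * c1aa * (γ1 1 - γ0 1 - D1 - s)) * hD1
      + (2 * c1aa * (γ1 0 - γ0 0 - x) + 2 * c1ab * (γ1 1 - γ0 1 - D1 - s)) * hx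
  obtain ⟨hu, hv⟩ : u = 0 ∧ v = 0 := by
    refine eq_zero_of_quadratic_nonpos hc1aa hdet ?_
    nlinarith [h.2 y hy0 hy1, mul_nonneg hdet.le hsv]
  ext i
  fin_cases i
  exacts [sub_eq_zero.mp hu, sub_eq_zero.mp hv]

lemma UD_floorResponse_sub_UD (hc1aa : c1aa ≠ 0)
    (hD0 : c1aa * D0 + c1ab * D1 = (1 - δ) / 2 * rα)
    (hD1 : c1ab * D0 + c1bb * D1 = (1 - δ) / 2 * rβ) (s A0 A1 : ℝ) (γ0 : Fin 2 → ℝ) :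
    UD c1aa c1ab c1bb rα rβ δ γ0 (floorResponse c1aa c1ab D0 D1 s γ0)
        - UD c1aa c1ab c1bb rα rβ δ ![A0, A1] ![A0 + D0, A1 + D1]
      = (1 - δ) * (rα * (γ0 0 - A0) + rβ * (γ0 1 - A1))
        - (c1aa * c1bb - c1ab ^ 2) / c1aa * s ^ 2 := by
  rw [UD_eq, UD_eq]
  simp only [floorResponse, cons_val_zero, cons_val_one]
  field_simp
  linear_combination (2 * s * c1ab) * hD0 - (2 * c1aa * s) * hD1

lemma alpha_foc_of_forall_UG_le (hc0aa : 0 < c0aa) {b : (Fin 2 → ℝ) → Fin 2 → ℝ}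
    {γ0 : Fin 2 → ℝ} {x y : ℝ} (hα : 0 ≤ γ0 0)
    (hb : ∀ t, 0 ≤ t → b ![t, γ0 1] = ![t + x, y])
    (hmax : ∀ t, 0 ≤ t →
      UG c0aa c0ab c0bb rα rβ δ ![t, γ0 1] (b ![t, γ0 1])
        ≤ UG c0aa c0ab c0bb rα rβ δ γ0 (b γ0)) :
    δ * rα ≤ 2 * (c0aa * γ0 0 + c0ab * γ0 1) := by
  have hbγ0 : b γ0 = ![γ0 0 + x, y] :=
    (congrArg b (FinVec.etaExpand_eq γ0).symm).trans (hb _ hα)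
  suffices δ * rα - 2 * c0ab * γ0 1 ≤ 2 * c0aa * γ0 0 by linarith
  refine le_two_mul_of_forall_le hc0aa fun t ht => ?_
  have := hmax t (hα.trans ht)
  rw [hb t (hα.trans ht), hbγ0, UG_eq, UG_eq] at this
  simp only [cons_val_zero, cons_val_one] at this
  linarith

theorem IsSPE.eq_floorResponse {θG ε A1 : ℝ} {b : (Fin 2 → ℝ) → Fin 2 → ℝ}
    {γ0s γ0 : Fin 2 → ℝ}
    (h : IsSPE c0aa c0ab c0bb c1aa c1ab c1bb rα rβ δ θG (A1 + D1 + 2 * ε) b γ0s)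
    (hc1aa : 0 < c1aa) (hdet : 0 < c1aa * c1bb - c1ab ^ 2)
    (hD0 : c1aa * D0 + c1ab * D1 = (1 - δ) / 2 * rα)
    (hD1 : c1ab * D0 + c1bb * D1 = (1 - δ) / 2 * rβ) (hD1pos : 0 ≤ D1) (hε : 0 ≤ ε)
    (hslack : |c1ab| * ε < c1aa * D0) (hγ0 : A1 + ε ≤ γ0 1) :
    b γ0 = floorResponse c1aa c1ab D0 D1 (max 0 (A1 + 2 * ε - γ0 1)) γ0 := by
  have hs0 : 0 ≤ max 0 (A1 + 2 * ε - γ0 1) := le_max_left _ _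
  have hsε : max 0 (A1 + 2 * ε - γ0 1) ≤ ε := max_le hε (by linarith)
  refine IsBestResponse.eq_floorResponse (h.1 γ0) hc1aa hdet hD0 hD1 hD1pos
    (by congr 1; ring) ?_
  calc c1ab * max 0 (A1 + 2 * ε - γ0 1) ≤ |c1ab| * max 0 (A1 + 2 * ε - γ0 1) :=
        mul_le_mul_of_nonneg_right (le_abs_self _) hs0
    _ ≤ |c1ab| * ε := mul_le_mul_of_nonneg_left hsε (abs_nonneg _)
    _ ≤ c1aa * D0 := hslack.le

theorem eventually_UG_lt {A0 A1 : ℝ} (hc1aa : 0 < c1aa) (hdet : 0 < c1aa * c1bb - c1ab ^ 2)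
    (hD0 : c1aa * D0 + c1ab * D1 = (1 - δ) / 2 * rα)
    (hD1 : c1ab * D0 + c1bb * D1 = (1 - δ) / 2 * rβ) (hD0pos : 0 < D0) (hD1pos : 0 ≤ D1)
    (hA0pos : 0 ≤ A0) (hA1 : c0ab * A0 + c0bb * A1 = δ / 2 * rβ) (hδ : 0 < δ)
    (hK1 : c1ab * rα < c1aa * rβ) :
    ∀ᶠ ε in 𝓝[>] 0, ∀ b γ0s,
      IsSPE c0aa c0ab c0bb c1aa c1ab c1bb rα rβ δ (A1 + ε) (A1 + D1 + 2 * ε) b γ0s →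
        UG c0aa c0ab c0bb rα rβ δ ![A0, A1] ![A0 + D0, A1 + D1]
          < UG c0aa c0ab c0bb rα rβ δ γ0s (b γ0s) := by
  filter_upwards [self_mem_nhdsWithin, eventually_mul_lt |c1ab| (mul_pos hc1aa hD0pos),
    eventually_mul_lt (c0bb * c1aa) (mul_pos hδ (sub_pos.mpr hK1))]
    with ε (hε : 0 < ε) hslack hsmall b γ0s h
  have hb : b ![A0, A1 + ε] = floorResponse c1aa c1ab D0 D1 ε ![A0, A1 + ε] := by
    rw [h.eq_floorResponse hc1aa hdet hD0 hD1 hD1pos hε.le hslack le_rfl]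
    congr
    simp only [cons_val_one, cons_val_zero]
    rw [max_eq_right (by linarith)]
    ring
  have hgain : UG c0aa c0ab c0bb rα rβ δ ![A0, A1 + ε] (b ![A0, A1 + ε])
      - UG c0aa c0ab c0bb rα rβ δ ![A0, A1] ![A0 + D0, A1 + D1]
      = ε * (δ * (c1aa * rβ - c1ab * rα) - c0bb * c1aa * ε) / c1aa := by
    rw [hb, UG_eq, UG_eq]
    simp only [floorResponse, cons_val_zero, cons_val_one]
    field_simp
    linear_combination (-2 * c1aa * ε) * hA1
  calc UG c0aa c0ab c0bb rα rβ δ ![A0, A1] ![A0 + D0, A1 + D1]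
      < UG c0aa c0ab c0bb rα rβ δ ![A0, A1 + ε] (b ![A0, A1 + ε]) := by
        rw [← sub_pos, hgain]
        exact div_pos (mul_pos hε (by linarith)) hc1aa
    _ ≤ UG c0aa c0ab c0bb rα rβ δ γ0s (b γ0s) := h.2.2.2 _ hA0pos le_rfl

theorem eventually_UD_lt {A0 A1 : ℝ} (hc0aa : 0 < c0aa) (hc1aa : 0 < c1aa)
    (hdet : 0 < c1aa * c1bb - c1ab ^ 2)
    (hD0 : c1aa * D0 + c1ab * D1 = (1 - δ) / 2 * rα)
    (hD1 : c1ab * D0 + c1bb * D1 = (1 - δ) / 2 * rβ) (hD0pos : 0 < D0) (hD1pos : 0 ≤ D1)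
    (hA0 : c0aa * A0 + c0ab * A1 = δ / 2 * rα) (hrα : 0 < rα) (hδ1 : δ < 1)
    (hK0 : c0ab * rα < c0aa * rβ) :
    ∀ᶠ ε in 𝓝[>] 0, ∀ b γ0s,
      IsSPE c0aa c0ab c0bb c1aa c1ab c1bb rα rβ δ (A1 + ε) (A1 + D1 + 2 * ε) b γ0s →
        UD c1aa c1ab c1bb rα rβ δ ![A0, A1] ![A0 + D0, A1 + D1]
          < UD c1aa c1ab c1bb rα rβ δ γ0s (b γ0s) := by
  filter_upwards [self_mem_nhdsWithin, eventually_mul_lt |c1ab| (mul_pos hc1aa hD0pos),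
    eventually_mul_lt ((c1aa * c1bb - c1ab ^ 2) * c0aa)
      (mul_pos (mul_pos (sub_pos.mpr hδ1) hc1aa) (sub_pos.mpr hK0))]
    with ε (hε : 0 < ε) hslack hsmall b γ0s h
  have hb := fun {γ0} => h.eq_floorResponse (γ0 := γ0) hc1aa hdet hD0 hD1 hD1pos hε.le hslack
  set s := max 0 (A1 + 2 * ε - γ0s 1)
  have hs0 : 0 ≤ s := le_max_left _ _
  have hsε : s ≤ ε := max_le hε.le (by linarith [h.2.2.1])
  have hfoc : δ * rα ≤ 2 * (c0aa * γ0s 0 + c0ab * γ0s 1) :=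
    alpha_foc_of_forall_UG_le (x := D0 - c1ab / c1aa * s) (y := γ0s 1 + (D1 + s)) hc0aa h.2.1
      (fun t _ => hb (γ0 := ![t, γ0s 1]) h.2.2.1)
      (fun t ht => h.2.2.2 _ ht h.2.2.1)
  have hrev : ε * (c0aa * rβ - c0ab * rα)
      ≤ c0aa * (rα * (γ0s 0 - A0) + rβ * (γ0s 1 - A1)) := by
    have hα : 0 ≤ c0aa * (γ0s 0 - A0) + c0ab * (γ0s 1 - A1) := by linarith
    have hβ : ε ≤ γ0s 1 - A1 := by linarith [h.2.2.1]
    nlinarith [mul_nonneg hrα.le hα, mul_le_mul_of_nonneg_right hβ (sub_pos.mpr hK0).le]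
  rw [← sub_pos, hb h.2.2.1, UD_floorResponse_sub_UD hc1aa.ne' hD0 hD1, sub_pos]
  calc (c1aa * c1bb - c1ab ^ 2) / c1aa * s ^ 2
      ≤ (c1aa * c1bb - c1ab ^ 2) / c1aa * ε ^ 2 := by gcongr
    _ < (1 - δ) * (rα * (γ0s 0 - A0) + rβ * (γ0s 1 - A1)) := by
      rw [div_mul_eq_mul_div, div_lt_iff₀ hc1aa]
      refine lt_of_mul_lt_mul_left ?_ hc0aa.le
      nlinarith [mul_lt_mul_of_pos_right hsmall hε,
        mul_le_mul_of_nonneg_left hrev (mul_pos (sub_pos.mpr hδ1) hc1aa).le]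

end Regulation

theorem mutualism_general
    (c0aa c0bb c0ab c1aa c1bb c1ab rα rβ δ : ℝ)
    (hc0aa : 0 < c0aa) (hc1aa : 0 < c1aa)
    (hrα : 0 < rα) (hrβ : 0 < rβ) (hδ0 : 0 < δ) (hδ1 : δ < 1)
    (hcond0 : InvCond2 c0aa c0ab c0bb rα rβ)
    (hcond1 : InvCond2 c1aa c1ab c1bb rα rβ) :
    ∃ ε : ℝ, 0 < ε ∧
      ∀ (b : (Fin 2 → ℝ) → (Fin 2 → ℝ)) (γ0s : Fin 2 → ℝ),
        IsSPE c0aa c0ab c0bb c1aa c1ab c1bb rα rβ δ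
          (gamma0A c0aa c0ab c0bb rα rβ δ 1 + ε)
          (gamma1A c0aa c0ab c0bb c1aa c1ab c1bb rα rβ δ 1 + 2 * ε) b γ0s →
        UG c0aa c0ab c0bb rα rβ δ (gamma0A c0aa c0ab c0bb rα rβ δ)
            (gamma1A c0aa c0ab c0bb c1aa c1ab c1bb rα rβ δ) <
          UG c0aa c0ab c0bb rα rβ δ γ0s (b γ0s) ∧
        UD c1aa c1ab c1bb rα rβ δ (gamma0A c0aa c0ab c0bb rα rβ δ)
            (gamma1A c0aa c0ab c0bb c1aa c1ab c1bb rα rβ δ) <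
          UD c1aa c1ab c1bb rα rβ δ γ0s (b γ0s) := by
  have hdet0 := hcond0.det_pos
  have hdet1 := hcond1.det_pos
  obtain ⟨A0, A1, hAvec, hA0, hA1, hA0pos, -⟩ := exists_smul_inv_mulVec_fin_two_pos
    (δ / 2) rα rβ hdet0 (by positivity) (hcond0.mul_lt_right hrβ) (hcond0.mul_lt_left hrα)
  obtain ⟨D0, D1, hDvec, hD0, hD1, hD0pos, hD1pos⟩ := exists_smul_inv_mulVec_fin_two_pos
    ((1 - δ) / 2) rα rβ hdet1 (by linarith) (hcond1.mul_lt_right hrβ) (hcond1.mul_lt_left hrα)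
  have hγ0A : gamma0A c0aa c0ab c0bb rα rβ δ = ![A0, A1] := hAvec
  have hγ1A : gamma1A c0aa c0ab c0bb c1aa c1ab c1bb rα rβ δ = ![A0 + D0, A1 + D1] := by
    rw [gamma1A, hγ0A, hDvec]; simp
  simp only [hγ0A, hγ1A, cons_val_one, cons_val_zero]
  obtain ⟨ε, ⟨hUG, hUD⟩, hε⟩ := ((eventually_UG_lt hc1aa hdet1 hD0 hD1 hD0pos
    hD1pos.le hA0pos.le hA1 hδ0 (hcond1.mul_lt_left hrα)).and
    (eventually_UD_lt hc0aa hc1aa hdet1 hD0 hD1 hD0pos hD1pos.le hA0 hrα hδ1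
      (hcond0.mul_lt_left hrα))).and self_mem_nhdsWithin |>.exists
  exact ⟨ε, hε, fun b γ0s h => ⟨hUG b γ0s h, hUD b γ0s h⟩⟩

/-- **Mutualism theorem.** Under the two-sided investment condition on both cost
matrices, there exists `ε > 0` such that the regulatory regime
`θG = β0^A + ε, θD = β1^A + 2ε` mutually improves both players' utilities in every
subgame perfect equilibrium, compared to the no-regulation outcome. -/
theorem mutualism
    (c0aa c0bb c0ab c1aa c1bb c1ab rα rβ δ : ℝ)
    (hc0aa : 0 < c0aa) (hc0bb : 0 < c0bb) (hc1aa : 0 < c1aa) (hc1bb : 0 < c1bb)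
    (hrα : 0 < rα) (hrβ : 0 < rβ) (hδ0 : 0 < δ) (hδ1 : δ < 1)
    (hcond0 : InvCond2 c0aa c0ab c0bb rα rβ)
    (hcond1 : InvCond2 c1aa c1ab c1bb rα rβ) :
    ∃ ε : ℝ, 0 < ε ∧
      ∀ (b : (Fin 2 → ℝ) → (Fin 2 → ℝ)) (γ0s : Fin 2 → ℝ),
        IsSPE c0aa c0ab c0bb c1aa c1ab c1bb rα rβ δ
          (gamma0A c0aa c0ab c0bb rα rβ δ 1 + ε)
          (gamma1A c0aa c0ab c0bb c1aa c1ab c1bb rα rβ δ 1 + 2 * ε) b γ0s →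
        UG c0aa c0ab c0bb rα rβ δ (gamma0A c0aa c0ab c0bb rα rβ δ)
            (gamma1A c0aa c0ab c0bb c1aa c1ab c1bb rα rβ δ) <
          UG c0aa c0ab c0bb rα rβ δ γ0s (b γ0s) ∧
        UD c1aa c1ab c1bb rα rβ δ (gamma0A c0aa c0ab c0bb rα rβ δ)
            (gamma1A c0aa c0ab c0bb c1aa c1ab c1bb rα rβ δ) <
          UD c1aa c1ab c1bb rα rβ δ γ0s (b γ0s) :=
  mutualism_general c0aa c0bb c0ab c1aa c1bb c1ab rα rβ δ hc0aa hc1aa hrα hrβ hδ0 hδ1 hcond0 hcond1
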